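/- If a compact 3-manifold M admits an ideal cubulation with n cubes, then M admits an ideal triangulation with at most 8n tetrahedra. -/

import Mathlib

open Set Topology

noncomputable section

abbrev E2 : Type := EuclideanSpace ℝ (Fin 2)
abbrev E3 : Type := EuclideanSpace ℝ (Fin 3)

/-- The (topological) boundary of a manifold-like space: points having no neighbourhood
homeomorphic to `ℝ^d`. -/
def mBoundary (d : ℕ) (M : Type) [TopologicalSpace M] : Set M :=
  {p | ¬ ∃ U ∈ nhds p, Nonempty (↥U ≃ₜ EuclideanSpace ℝ (Fin d))}

/-- A connected compact topological 3-manifold, possibly with boundary (locally modelled on the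
closed half-space). -/
def IsCompact3Manifold (M : Type) [TopologicalSpace M] : Prop :=
  CompactSpace M ∧ ConnectedSpace M ∧ T2Space M ∧
    ∀ p : M, ∃ U ∈ nhds p, Nonempty (↥U ≃ₜ ↥{x : E3 | 0 ≤ x 0})

/-- A (possibly disconnected) closed surface: a compact topological 2-manifold without boundary. -/
def IsClosedSurface (S : Type) [TopologicalSpace S] : Prop :=
  CompactSpace S ∧ T2Space S ∧ ∀ p : S, ∃ U ∈ nhds p, Nonempty (↥U ≃ₜ E2)

/-- The union of the first `k` coordinate planes of `ℝ³`. -/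
def coordPlanes (k : ℕ) : Set E3 := {x | ∃ i : Fin 3, (i : ℕ) < k ∧ x i = 0}

/-- A Dehn surface in `M`: a transverse immersion of a closed surface into `M`.  Every point of
the image has 1, 2 or 3 preimages, and near a point with `k` preimages the image looks like the
union of `k` coordinate planes of `ℝ³`. -/
structure DehnSurface (M : Type) [TopologicalSpace M] where
  S : Type
  ts : TopologicalSpace S
  closedSurface : @IsClosedSurface S ts
  f : S → M
  cont : @Continuous S M ts _ f
  card_fiber : ∀ p ∈ Set.range f, Nat.card (f ⁻¹' {p}) ∈ ({1, 2, 3} : Set ℕ)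
  local_model : ∀ p ∈ Set.range f, ∃ V ∈ nhdsWithin p (Set.range f),
      Nonempty (↥V ≃ₜ ↥(coordPlanes (Nat.card (f ⁻¹' {p}))))

namespace DehnSurface

variable {M : Type} [TopologicalSpace M]

def image (D : DehnSurface M) : Set M := Set.range D.f

def triplePoints (D : DehnSurface M) : Set M := {p ∈ D.image | Nat.card (D.f ⁻¹' {p}) = 3}

def singularSet (D : DehnSurface M) : Set M := {p ∈ D.image | 2 ≤ Nat.card (D.f ⁻¹' {p})}

end DehnSurface

/-- `A` is a strong deformation retract of the subspace `X ⊆ M`. -/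
def SDROnto {M : Type} [TopologicalSpace M] (X A : Set M) : Prop :=
  A ⊆ X ∧ ∃ H : ContinuousMap (↥X × unitInterval) ↥X,
    (∀ x : ↥X, H (x, 0) = x) ∧ (∀ x : ↥X, (↑(H (x, 1)) : M) ∈ A) ∧
    (∀ x : ↥X, (x : M) ∈ A → ∀ t : unitInterval, H (x, t) = x)

/-- An open ball in `M`. -/
def IsOpenBall {M : Type} [TopologicalSpace M] (B : Set M) : Prop :=
  IsOpen B ∧ Nonempty (↥B ≃ₜ ↥(Metric.ball (0 : E3) 1))

namespace DehnSurface

variable {M : Type} [TopologicalSpace M]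

/-- The Dehn surface is quasi-filling with `n` removed balls: the manifold minus `n` disjoint
open balls (with disjoint closures, away from the boundary and from the surface) strong
deformation retracts (collapses) onto the surface. -/
def QuasiFillingWith (D : DehnSurface M) (n : ℕ) : Prop :=
  ∃ B : Fin n → Set M,
    (∀ i, IsOpenBall (B i)) ∧
    (Pairwise fun i j => Disjoint (closure (B i)) (closure (B j))) ∧
    (∀ i, Disjoint (closure (B i)) D.image) ∧
    (∀ i, Disjoint (closure (B i)) (mBoundary 3 M)) ∧
    SDROnto ((Set.univ : Set M) \ ⋃ i, B i) D.image

def QuasiFilling (D : DehnSurface M) : Prop := ∃ n : ℕ, D.QuasiFillingWith n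

/-- The singularities induce a cell decomposition: there is at least one triple point, the
singular set minus the triple points consists of open intervals (edges), and the complement of
the singular set in the surface consists of open discs (regions). -/
def CellDecomposed (D : DehnSurface M) : Prop :=
  D.triplePoints.Nonempty ∧
  (∀ p ∈ D.singularSet \ D.triplePoints,
    Nonempty (↥(connectedComponentIn (D.singularSet \ D.triplePoints) p) ≃ₜ ℝ)) ∧
  (∀ p ∈ D.image \ D.singularSet,
    Nonempty (↥(connectedComponentIn (D.image \ D.singularSet) p) ≃ₜ E2))

def FillingWith (D : DehnSurface M) (n : ℕ) : Prop := D.QuasiFillingWith n ∧ D.CellDecomposed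

def Filling (D : DehnSurface M) : Prop := D.QuasiFilling ∧ D.CellDecomposed

end DehnSurface

/-- The surface-complexity of `M`: the minimal number of triple points of a quasi-filling Dehn
surface of `M`. -/
def sc (M : Type) [TopologicalSpace M] : ℕ :=
  sInf {c | ∃ D : DehnSurface M, D.QuasiFilling ∧ Nat.card D.triplePoints = c}

/-! ### Model spaces -/

abbrev Sphere3 : Type := ↥(Metric.sphere (0 : EuclideanSpace ℝ (Fin 4)) 1)
abbrev Ball3 : Type := ↥(Metric.closedBall (0 : E3) 1)

/-- The lens space `L(p,1)`, as the quotient of the unit sphere of `ℂ²` by the diagonal action of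
the `p`-th roots of unity. -/
def lensSetoid (p : ℕ) : Setoid ↥(Metric.sphere (0 : EuclideanSpace ℂ (Fin 2)) 1) :=
  Relation.EqvGen.setoid fun x y =>
    ∃ k : ℤ, (y : EuclideanSpace ℂ (Fin 2)) =
      Complex.exp (2 * (Real.pi : ℂ) * Complex.I * (k : ℂ) / (p : ℂ)) • (x : EuclideanSpace ℂ (Fin 2))

def LensSpace (p : ℕ) : Type := Quotient (lensSetoid p)

instance (p : ℕ) : TopologicalSpace (LensSpace p) :=
  inferInstanceAs (TopologicalSpace (Quotient (lensSetoid p)))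

/-- The projective space `ℝP³ = L(2,1)`. -/
abbrev ProjSpace3 : Type := LensSpace 2

/-- The projective plane, as the quotient of the 2-sphere by the antipodal map. -/
def antipodalSetoid : Setoid ↥(Metric.sphere (0 : E3) 1) :=
  Relation.EqvGen.setoid fun x y => (x : E3) = -(y : E3)

def RP2 : Type := Quotient antipodalSetoid

instance : TopologicalSpace RP2 := inferInstanceAs (TopologicalSpace (Quotient antipodalSetoid))

def RP2.mk : ↥(Metric.sphere (0 : E3) 1) → RP2 := Quotient.mk antipodalSetoid

/-! ### Irreducibility conditions -/

/-- A subset of `M` bounds a ball. -/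
def BoundsBall {M : Type} [TopologicalSpace M] (Sg : Set M) : Prop :=
  ∃ (B : Set M) (e : ↥(Metric.closedBall (0 : E3) 1) ≃ₜ ↥B), Sg ⊆ B ∧
    ∀ x : ↥(Metric.closedBall (0 : E3) 1),
      ((x : E3) ∈ Metric.sphere (0 : E3) 1 ↔ (e x : M) ∈ Sg)

/-- `M` contains a two-sided embedded projective plane. -/
def HasTwoSidedRP2 (M : Type) [TopologicalSpace M] : Prop :=
  ∃ P : Set M, Nonempty (↥P ≃ₜ RP2) ∧
    ∃ U : Set M, IsOpen U ∧ P ⊆ U ∧ ∃ e : ↥U ≃ₜ ↥P × ℝ,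
      ∀ x : ↥U, ((x : M) ∈ P ↔ (e x).2 = 0)

/-- `M` is `ℙ²`-irreducible: every embedded 2-sphere bounds a ball and there is no two-sided
embedded projective plane. -/
def P2Irreducible (M : Type) [TopologicalSpace M] : Prop :=
  (∀ Sg : Set M, Nonempty (↥Sg ≃ₜ ↥(Metric.sphere (0 : E3) 1)) → BoundsBall Sg) ∧
  ¬ HasTwoSidedRP2 M

/-- A properly embedded disc in `M`: a disc meeting the boundary exactly in its boundary circle. -/
def IsProperDisc {M : Type} [TopologicalSpace M] (D : Set M) : Prop :=
  ∃ e : ↥(Metric.closedBall (0 : E2) 1) ≃ₜ ↥D,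
    ∀ x : ↥(Metric.closedBall (0 : E2) 1),
      ((x : E2) ∈ Metric.sphere (0 : E2) 1 ↔ (e x : M) ∈ mBoundary 3 M)

/-- `M` is boundary-irreducible: the boundary of every properly embedded disc bounds a disc
inside the boundary of `M`. -/
def BoundaryIrreducible (M : Type) [TopologicalSpace M] : Prop :=
  ∀ D : Set M, IsProperDisc D →
    ∃ D' : Set M, D' ⊆ mBoundary 3 M ∧
      ∃ e : ↥(Metric.closedBall (0 : E2) 1) ≃ₜ ↥D',
        ∀ x : ↥(Metric.closedBall (0 : E2) 1),
          ((x : E2) ∈ Metric.sphere (0 : E2) 1 ↔ (e x : M) ∈ D)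

/-- A properly embedded annulus in `M`. -/
def IsProperAnnulus {M : Type} [TopologicalSpace M] (A : Set M) : Prop :=
  ∃ e : (↥(Metric.sphere (0 : E2) 1) × ↥(Set.Icc (0:ℝ) 1)) ≃ₜ ↥A,
    ∀ x : ↥(Metric.sphere (0 : E2) 1) × ↥(Set.Icc (0:ℝ) 1),
      (((x.2 : ℝ) = 0 ∨ (x.2 : ℝ) = 1) ↔ (e x : M) ∈ mBoundary 3 M)

/-- The annulus `A` cuts off from `M` a cylinder (a ball meeting `∂M` in two discs), the annulus
being the side `S¹ × [0,1]` of the cylinder `D² × [0,1]`. -/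
def CutsOffCylinder {M : Type} [TopologicalSpace M] (A : Set M) : Prop :=
  ∃ X : Set M, IsClosed X ∧ frontier X ⊆ A ∧ A ⊆ X ∧
    ∃ e : ↥X ≃ₜ (↥(Metric.closedBall (0 : E2) 1) × ↥(Set.Icc (0:ℝ) 1)),
      ∀ x : ↥X, ((x : M) ∈ A ↔ ((e x).1 : E2) ∈ Metric.sphere (0 : E2) 1)

/-- The annulus `A` cuts off from `M` a solid torus meeting `∂M` in another annulus. -/
def CutsOffSolidTorus {M : Type} [TopologicalSpace M] (A : Set M) : Prop :=
  ∃ X : Set M, IsClosed X ∧ frontier X ⊆ A ∧ A ⊆ X ∧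
    ∃ e : ↥X ≃ₜ (↥(Metric.sphere (0 : E2) 1) × ↥(Metric.closedBall (0 : E2) 1)),
      ∀ x : ↥X, ((x : M) ∈ A ↔
        (((e x).2 : E2) ∈ Metric.sphere (0 : E2) 1 ∧ 0 ≤ ((e x).2 : E2) 0))

/-- The Möbius band, as the square `[0,1] × [-1,1]` with `(0,t)` glued to `(1,-t)`. -/
def mobiusSetoid : Setoid (↥(Set.Icc (0:ℝ) 1) × ↥(Set.Icc (-1:ℝ) 1)) :=
  Relation.EqvGen.setoid fun a b => (a.1 : ℝ) = 0 ∧ (b.1 : ℝ) = 1 ∧ (a.2 : ℝ) = -(b.2 : ℝ)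

def MobiusBand : Type := Quotient mobiusSetoid

instance : TopologicalSpace MobiusBand := inferInstanceAs (TopologicalSpace (Quotient mobiusSetoid))

def MobiusBand.mk : (↥(Set.Icc (0:ℝ) 1) × ↥(Set.Icc (-1:ℝ) 1)) → MobiusBand :=
  Quotient.mk mobiusSetoid

def mobiusBoundary : Set MobiusBand := MobiusBand.mk '' {a | |(a.2 : ℝ)| = 1}

/-- A properly embedded Möbius strip in `M`. -/
def IsProperMobius {M : Type} [TopologicalSpace M] (A : Set M) : Prop :=
  ∃ e : MobiusBand ≃ₜ ↥A,
    ∀ x : MobiusBand, (x ∈ mobiusBoundary ↔ (e x : M) ∈ mBoundary 3 M)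

/-- The solid Klein bottle: the twisted `[-1,1]²`-bundle over the circle, i.e. the quotient of
`[0,1] × [-1,1] × [-1,1]` gluing `(0,s,t)` to `(1,s,-t)`. -/
def solidKleinSetoid : Setoid (↥(Set.Icc (0:ℝ) 1) × ↥(Set.Icc (-1:ℝ) 1) × ↥(Set.Icc (-1:ℝ) 1)) :=
  Relation.EqvGen.setoid fun a b =>
    (a.1 : ℝ) = 0 ∧ (b.1 : ℝ) = 1 ∧ (a.2.1 : ℝ) = (b.2.1 : ℝ) ∧ (a.2.2 : ℝ) = -(b.2.2 : ℝ)

def SolidKlein : Type := Quotient solidKleinSetoid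

instance : TopologicalSpace SolidKlein :=
  inferInstanceAs (TopologicalSpace (Quotient solidKleinSetoid))

def SolidKlein.mk :
    (↥(Set.Icc (0:ℝ) 1) × ↥(Set.Icc (-1:ℝ) 1) × ↥(Set.Icc (-1:ℝ) 1)) → SolidKlein :=
  Quotient.mk solidKleinSetoid

/-- One of the two Möbius strips into which the boundary Klein bottle of the solid Klein bottle
splits. -/
def solidKleinMobius : Set SolidKlein :=
  SolidKlein.mk '' {a | (|(a.2.1 : ℝ)| = 1 ∨ |(a.2.2 : ℝ)| = 1) ∧ 0 ≤ (a.2.1 : ℝ)}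

/-- The Möbius strip `A` cuts off from `M` a solid Klein bottle meeting `∂M` in another
Möbius strip. -/
def CutsOffSolidKlein {M : Type} [TopologicalSpace M] (A : Set M) : Prop :=
  ∃ X : Set M, IsClosed X ∧ frontier X ⊆ A ∧ A ⊆ X ∧
    ∃ e : ↥X ≃ₜ SolidKlein, ∀ x : ↥X, ((x : M) ∈ A ↔ e x ∈ solidKleinMobius)

/-- `M` has no essential annuli and no essential Möbius strips: every properly embedded annulus
cuts off a cylinder or a solid torus, and every properly embedded Möbius strip cuts off a solid
Klein bottle. -/
def NoEssentialAnnuliOrMobius (M : Type) [TopologicalSpace M] : Prop :=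
  (∀ A : Set M, IsProperAnnulus A → CutsOffCylinder A ∨ CutsOffSolidTorus A) ∧
  (∀ A : Set M, IsProperMobius A → CutsOffSolidKlein A)

/-! ### Ideal cubulations and triangulations -/

/-- The quotient `M̂` of `M` obtained by collapsing each boundary component to a point. -/
def hatSetoid (M : Type) [TopologicalSpace M] : Setoid M :=
  Relation.EqvGen.setoid fun x y =>
    x ∈ mBoundary 3 M ∧ y ∈ mBoundary 3 M ∧
      connectedComponentIn (mBoundary 3 M) x = connectedComponentIn (mBoundary 3 M) y

def Mhat (M : Type) [TopologicalSpace M] : Type := Quotient (hatSetoid M)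

instance (M : Type) [TopologicalSpace M] : TopologicalSpace (Mhat M) :=
  inferInstanceAs (TopologicalSpace (Quotient (hatSetoid M)))

def Mhat.mk {M : Type} [TopologicalSpace M] : M → Mhat M := Quotient.mk (hatSetoid M)

/-- The points of `M̂` corresponding to collapsed boundary components of `M`. -/
def collapsedBoundary (M : Type) [TopologicalSpace M] : Set (Mhat M) :=
  Mhat.mk '' mBoundary 3 M

def unitCube : Set E3 := {x | ∀ i, x i ∈ Set.Icc (0:ℝ) 1}
def openUnitCube : Set E3 := {x | ∀ i, x i ∈ Set.Ioo (0:ℝ) 1}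
def cubeCorners : Set E3 := {x ∈ unitCube | ∀ i, x i = 0 ∨ x i = 1}

def stdTetra : Set (Fin 4 → ℝ) := stdSimplex ℝ (Fin 4)
def openTetra : Set (Fin 4 → ℝ) := {x ∈ stdTetra | ∀ i, 0 < x i}
def tetraCorners : Set (Fin 4 → ℝ) := {x ∈ stdTetra | ∃ i, x i = 1}

/-- An ideal cell decomposition of a space `X` with `n` cells modelled on the cell
`cell ⊆ E`: a quotient map from `n` disjoint copies of the model cell, injective on the open
cells, whose open cells are unidentified, and whose set of vertices (images of corners) contains
the prescribed set `V` of ideal points. -/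
structure IdealDecomp (X : Type) [TopologicalSpace X] {E : Type} [TopologicalSpace E]
    (cell openCell corners : Set E) (V : Set X) (n : ℕ) where
  q : Fin n × ↥cell → X
  quot : Topology.IsQuotientMap q
  injOpen : Set.InjOn q {p : Fin n × ↥cell | (p.2 : E) ∈ openCell}
  openSat : ∀ p p' : Fin n × ↥cell, q p = q p' → (p.2 : E) ∈ openCell → (p'.2 : E) ∈ openCell
  vertexCond : ∀ x ∈ V, ∃ p : Fin n × ↥cell, (p.2 : E) ∈ corners ∧ q p = x

/-- `M` has an ideal cubulation with `n` cubes. -/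
def HasIdealCubulation (M : Type) [TopologicalSpace M] (n : ℕ) : Prop :=
  Nonempty (IdealDecomp (Mhat M) unitCube openUnitCube cubeCorners (collapsedBoundary M) n)

/-- `M` has an ideal triangulation with `n` tetrahedra. -/
def HasIdealTriangulation (M : Type) [TopologicalSpace M] (n : ℕ) : Prop :=
  Nonempty (IdealDecomp (Mhat M) stdTetra openTetra tetraCorners (collapsedBoundary M) n)

/-! ### Matveev complexity -/

/-- A `Y`-shaped triod in the plane: the union of three rays from the origin. -/
def Yset : Set E2 :=
  {v | (v 1 = 0 ∧ 0 ≤ v 0) ∨ (v 0 = 0 ∧ 0 ≤ v 1) ∨ (v 0 = v 1 ∧ v 0 ≤ 0)}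

def tetraVert : Fin 4 → Fin 3 → ℝ := ![![1,1,1], ![1,-1,-1], ![-1,1,-1], ![-1,-1,1]]

/-- The local model of a vertex of a simple polyhedron: the cone from the origin over the
1-skeleton of the tetrahedron. -/
def vertexModel : Set E3 :=
  {x | ∃ (i j : Fin 4) (a b : ℝ), 0 ≤ a ∧ 0 ≤ b ∧ a + b ≤ 1 ∧
    ∀ t, x t = a * tetraVert i t + b * tetraVert j t}

def localPlane {M : Type} [TopologicalSpace M] (P : Set M) (p : M) : Prop :=
  ∃ V ∈ nhdsWithin p P, Nonempty (↥V ≃ₜ E2)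

def localY {M : Type} [TopologicalSpace M] (P : Set M) (p : M) : Prop :=
  ∃ V ∈ nhdsWithin p P, Nonempty (↥V ≃ₜ (↥Yset × ℝ))

def localVertex {M : Type} [TopologicalSpace M] (P : Set M) (p : M) : Prop :=
  ∃ V ∈ nhdsWithin p P, Nonempty (↥V ≃ₜ ↥vertexModel)

/-- A simple polyhedron in `M`: each point has a neighbourhood modelled on a plane, on `Y × ℝ`,
or on the cone over the 1-skeleton of the tetrahedron. -/
def IsSimplePolyhedron {M : Type} [TopologicalSpace M] (P : Set M) : Prop :=
  IsClosed P ∧ ∀ p ∈ P, localPlane P p ∨ localY P p ∨ localVertex P p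

/-- The vertices of a simple polyhedron: the points that are not of plane or triple-line type. -/
def spineVertices {M : Type} [TopologicalSpace M] (P : Set M) : Set M :=
  {p ∈ P | ¬ localPlane P p ∧ ¬ localY P p}

/-- A spine of `M`: `M` (if `∂M ≠ ∅`), or `M` minus an open ball (if `∂M = ∅`), collapses
onto `P`. -/
def IsSpine {M : Type} [TopologicalSpace M] (P : Set M) : Prop :=
  ((mBoundary 3 M).Nonempty ∧ SDROnto (Set.univ : Set M) P) ∨
  (mBoundary 3 M = ∅ ∧ ∃ B : Set M, IsOpenBall B ∧ Disjoint (closure B) P ∧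
    SDROnto ((Set.univ : Set M) \ B) P)

/-- The Matveev complexity of `M`: the minimal number of vertices of a simple spine of `M`. -/
def matveevComplexity (M : Type) [TopologicalSpace M] : ℕ :=
  sInf {n | ∃ P : Set M, IsSimplePolyhedron P ∧ IsSpine P ∧ Nat.card (spineVertices P) = n}

/-! ### Connected sums -/

/-- `X` is a connected sum of `M₁` and `M₂`: it is covered by two closed pieces meeting in a
2-sphere, the pieces being homeomorphic to `M₁` and `M₂` with an open ball removed. -/
def IsConnectedSum (X M₁ M₂ : Type) [TopologicalSpace X] [TopologicalSpace M₁]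
    [TopologicalSpace M₂] : Prop :=
  ∃ X₁ X₂ : Set X, IsClosed X₁ ∧ IsClosed X₂ ∧ X₁ ∪ X₂ = Set.univ ∧
    Nonempty (↥(X₁ ∩ X₂) ≃ₜ ↥(Metric.sphere (0 : E3) 1)) ∧
    (∃ (B₁ : Set M₁) (e₁ : ↥X₁ ≃ₜ ↥((Set.univ : Set M₁) \ B₁)), IsOpenBall B₁ ∧
      ∀ x : ↥X₁, ((x : X) ∈ X₂ ↔ (e₁ x : M₁) ∈ frontier B₁)) ∧
    (∃ (B₂ : Set M₂) (e₂ : ↥X₂ ≃ₜ ↥((Set.univ : Set M₂) \ B₂)), IsOpenBall B₂ ∧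
      ∀ x : ↥X₂, ((x : X) ∈ X₁ ↔ (e₂ x : M₂) ∈ frontier B₂))

/-- `X` is a boundary connected sum of `M₁` and `M₂`: it is covered by two closed pieces
homeomorphic to `M₁` and `M₂`, meeting in a disc lying in the boundaries. -/
def IsBoundaryConnectedSum (X M₁ M₂ : Type) [TopologicalSpace X] [TopologicalSpace M₁]
    [TopologicalSpace M₂] : Prop :=
  ∃ X₁ X₂ : Set X, IsClosed X₁ ∧ IsClosed X₂ ∧ X₁ ∪ X₂ = Set.univ ∧
    Nonempty (↥(X₁ ∩ X₂) ≃ₜ ↥(Metric.closedBall (0 : E2) 1)) ∧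
    (∃ e₁ : ↥X₁ ≃ₜ M₁, ∀ x : ↥X₁, (x : X) ∈ X₂ → e₁ x ∈ mBoundary 3 M₁) ∧
    (∃ e₂ : ↥X₂ ≃ₜ M₂, ∀ x : ↥X₂, (x : X) ∈ X₁ → e₂ x ∈ mBoundary 3 M₂)

/-- The standing hypotheses: a connected compact `ℙ²`-irreducible boundary-irreducible
3-manifold without essential annuli and Möbius strips. -/
def GoodManifold (M : Type) [TopologicalSpace M] : Prop :=
  IsCompact3Manifold M ∧ P2Irreducible M ∧ BoundaryIrreducible M ∧ NoEssentialAnnuliOrMobius M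

end


namespace CubToTri

lemma fin3 : ∀ j : Fin 3, j = 0 ∨ j = 1 ∨ j = 2 := by decide

lemma fin4 : ∀ j : Fin 4, j = 0 ∨ j = 1 ∨ j = 2 ∨ j = 3 := by decide

lemma v30 : ((0 : Fin 3) : ℕ) = 0 := rfl
lemma v31 : ((1 : Fin 3) : ℕ) = 1 := rfl
lemma v32 : ((2 : Fin 3) : ℕ) = 2 := rfl
lemma v40 : ((0 : Fin 4) : ℕ) = 0 := rfl
lemma v41 : ((1 : Fin 4) : ℕ) = 1 := rfl
lemma v42 : ((2 : Fin 4) : ℕ) = 2 := rfl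
lemma v43 : ((3 : Fin 4) : ℕ) = 3 := rfl

/-- The affine map sending the standard tetrahedron onto the order-simplex of the
permutation `σ` inside the unit cube. -/
def phi (σ : Equiv.Perm (Fin 3)) (t : Fin 4 → ℝ) : E3 :=
  WithLp.toLp 2 fun i => ∑ k : Fin 4, if ((σ.symm i : ℕ) < (k : ℕ)) then t k else 0

lemma phi_apply (σ : Equiv.Perm (Fin 3)) (t : Fin 4 → ℝ) (i : Fin 3) :
    phi σ t i = ∑ k : Fin 4, if ((σ.symm i : ℕ) < (k : ℕ)) then t k else 0 := rfl

lemma phi_s0 (σ : Equiv.Perm (Fin 3)) (t : Fin 4 → ℝ) :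
    phi σ t (σ 0) = t 1 + t 2 + t 3 := by
  rw [phi_apply, Equiv.symm_apply_apply, Fin.sum_univ_four]
  rw [v30, v40, v41, v42, v43]
  norm_num

lemma phi_s1 (σ : Equiv.Perm (Fin 3)) (t : Fin 4 → ℝ) :
    phi σ t (σ 1) = t 2 + t 3 := by
  rw [phi_apply, Equiv.symm_apply_apply, Fin.sum_univ_four]
  rw [v31, v40, v41, v42, v43]
  norm_num

lemma phi_s2 (σ : Equiv.Perm (Fin 3)) (t : Fin 4 → ℝ) :
    phi σ t (σ 2) = t 3 := by
  rw [phi_apply, Equiv.symm_apply_apply, Fin.sum_univ_four]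
  rw [v32, v40, v41, v42, v43]
  norm_num

lemma sum_four {t : Fin 4 → ℝ} (ht : t ∈ stdTetra) : t 0 + t 1 + t 2 + t 3 = 1 := by
  have := ht.2
  rwa [Fin.sum_univ_four] at this

lemma phi_mem_unitCube (σ : Equiv.Perm (Fin 3)) {t : Fin 4 → ℝ} (ht : t ∈ stdTetra) :
    phi σ t ∈ unitCube := by
  intro i
  have hsum := sum_four ht
  have h0 := ht.1 0; have h1 := ht.1 1; have h2 := ht.1 2; have h3 := ht.1 3
  have hi : σ (σ.symm i) = i := σ.apply_symm_apply i
  rcases fin3 (σ.symm i) with hj | hj | hj <;> rw [hj] at hi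
  · rw [← hi, phi_s0]; constructor <;> linarith
  · rw [← hi, phi_s1]; constructor <;> linarith
  · rw [← hi, phi_s2]; constructor <;> linarith

lemma phi_mem_open (σ : Equiv.Perm (Fin 3)) {t : Fin 4 → ℝ} (ht : t ∈ openTetra) :
    phi σ t ∈ openUnitCube := by
  intro i
  have hsum := sum_four ht.1
  have h0 := ht.2 0; have h1 := ht.2 1; have h2 := ht.2 2; have h3 := ht.2 3
  have hi : σ (σ.symm i) = i := σ.apply_symm_apply i
  rcases fin3 (σ.symm i) with hj | hj | hj <;> rw [hj] at hi
  · rw [← hi, phi_s0]; constructor <;> linarith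
  · rw [← hi, phi_s1]; constructor <;> linarith
  · rw [← hi, phi_s2]; constructor <;> linarith

lemma phi_injOn (σ : Equiv.Perm (Fin 3)) {t t' : Fin 4 → ℝ} (ht : t ∈ stdTetra)
    (ht' : t' ∈ stdTetra) (h : phi σ t = phi σ t') : t = t' := by
  have h0 : phi σ t (σ 0) = phi σ t' (σ 0) := by rw [h]
  have h1 : phi σ t (σ 1) = phi σ t' (σ 1) := by rw [h]
  have h2 : phi σ t (σ 2) = phi σ t' (σ 2) := by rw [h]
  rw [phi_s0, phi_s0] at h0
  rw [phi_s1, phi_s1] at h1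
  rw [phi_s2, phi_s2] at h2
  have hs := sum_four ht
  have hs' := sum_four ht'
  funext k
  obtain rfl | rfl | rfl | rfl := fin4 k <;> linarith

lemma strict_chain {x : E3} {σ : Equiv.Perm (Fin 3)}
    (h1 : x (σ 2) < x (σ 1)) (h2 : x (σ 1) < x (σ 0)) {a b : Fin 3} (hab : a < b) :
    x (σ b) < x (σ a) := by
  obtain rfl | rfl | rfl := fin3 a <;> obtain rfl | rfl | rfl := fin3 b <;>
    first
      | linarith
      | exact absurd hab (by decide)

lemma perm_eq_of_anti {x : E3} {σ σ' : Equiv.Perm (Fin 3)}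
    (h1 : x (σ 2) < x (σ 1)) (h2 : x (σ 1) < x (σ 0))
    (h1' : x (σ' 2) ≤ x (σ' 1)) (h2' : x (σ' 1) ≤ x (σ' 0)) : σ' = σ := by
  have key : ∀ a b : Fin 3, x (σ b) ≤ x (σ a) → b ≠ a → a < b := by
    intro a b hle hne
    rcases lt_trichotomy a b with h | h | h
    · exact h
    · exact absurd h.symm hne
    · exact absurd hle (not_le.mpr (strict_chain h1 h2 h))
  set f : Fin 3 → Fin 3 := fun j => σ.symm (σ' j) with hf
  have hxf : ∀ j, x (σ (f j)) = x (σ' j) := fun j =>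
    congrArg x (σ.apply_symm_apply (σ' j))
  have hinj : f 0 ≠ f 1 ∧ f 1 ≠ f 2 := by
    constructor <;> intro hcon <;>
      simpa using (σ'.injective (σ.symm.injective hcon))
  have k01 : f 0 < f 1 := key _ _ (by rw [hxf, hxf]; exact h2') (Ne.symm hinj.1)
  have k12 : f 1 < f 2 := key _ _ (by rw [hxf, hxf]; exact h1') (Ne.symm hinj.2)
  have hf0 : f 0 = 0 := by omega
  have hf1 : f 1 = 1 := by omega
  have hf2 : f 2 = 2 := by omega
  refine Equiv.ext fun j => ?_
  obtain rfl | rfl | rfl := fin3 j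
  · have := congrArg σ hf0; rwa [hf, Equiv.apply_symm_apply] at this
  · have := congrArg σ hf1; rwa [hf, Equiv.apply_symm_apply] at this
  · have := congrArg σ hf2; rwa [hf, Equiv.apply_symm_apply] at this

lemma exists_perm_sorted (x : E3) :
    ∃ σ : Equiv.Perm (Fin 3), x (σ 2) ≤ x (σ 1) ∧ x (σ 1) ≤ x (σ 0) := by
  set f : Fin 3 → ℝ := fun i => x i with hf
  have hm := Tuple.monotone_sort f
  refine ⟨Fin.revPerm.trans (Tuple.sort f), ?_, ?_⟩
  · have e2 : Fin.revPerm (2 : Fin 3) = 0 := by decide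
    have e1 : Fin.revPerm (1 : Fin 3) = 1 := by decide
    have := hm (show (0 : Fin 3) ≤ 1 by decide)
    simpa [Equiv.trans_apply, e2, e1, hf] using this
  · have e1 : Fin.revPerm (1 : Fin 3) = 1 := by decide
    have e0 : Fin.revPerm (0 : Fin 3) = 2 := by decide
    have := hm (show (1 : Fin 3) ≤ 2 by decide)
    simpa [Equiv.trans_apply, e1, e0, hf] using this

/-- The explicit preimage of a point of the order simplex. -/
def tOf (x : E3) (σ : Equiv.Perm (Fin 3)) : Fin 4 → ℝ :=
  ![1 - x (σ 0), x (σ 0) - x (σ 1), x (σ 1) - x (σ 2), x (σ 2)]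

lemma tOf0 (x : E3) (σ : Equiv.Perm (Fin 3)) : tOf x σ 0 = 1 - x (σ 0) := rfl
lemma tOf1 (x : E3) (σ : Equiv.Perm (Fin 3)) : tOf x σ 1 = x (σ 0) - x (σ 1) := rfl
lemma tOf2 (x : E3) (σ : Equiv.Perm (Fin 3)) : tOf x σ 2 = x (σ 1) - x (σ 2) := rfl
lemma tOf3 (x : E3) (σ : Equiv.Perm (Fin 3)) : tOf x σ 3 = x (σ 2) := rfl

lemma tOf_mem {x : E3} (hx : x ∈ unitCube) {σ : Equiv.Perm (Fin 3)}
    (h1 : x (σ 2) ≤ x (σ 1)) (h2 : x (σ 1) ≤ x (σ 0)) : tOf x σ ∈ stdTetra := by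
  have ha := hx (σ 0); have hb := hx (σ 1); have hc := hx (σ 2)
  constructor
  · intro i
    obtain rfl | rfl | rfl | rfl := fin4 i
    · rw [tOf0]; linarith [ha.2]
    · rw [tOf1]; linarith
    · rw [tOf2]; linarith
    · rw [tOf3]; linarith [hc.1]
  · rw [Fin.sum_univ_four, tOf0, tOf1, tOf2, tOf3]
    ring

lemma phi_tOf {x : E3} {σ : Equiv.Perm (Fin 3)} : phi σ (tOf x σ) = x := by
  ext i
  have hi : σ (σ.symm i) = i := σ.apply_symm_apply i
  rcases fin3 (σ.symm i) with hj | hj | hj <;> rw [hj] at hi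
  · rw [← hi, phi_s0, tOf1, tOf2, tOf3]; ring
  · rw [← hi, phi_s1, tOf2, tOf3]; ring
  · rw [← hi, phi_s2, tOf3]

lemma phi_surj {x : E3} (hx : x ∈ unitCube) :
    ∃ (σ : Equiv.Perm (Fin 3)) (t : Fin 4 → ℝ), t ∈ stdTetra ∧ phi σ t = x := by
  obtain ⟨σ, h1, h2⟩ := exists_perm_sorted x
  exact ⟨σ, tOf x σ, tOf_mem hx h1 h2, phi_tOf⟩

lemma corner_lemma {x : E3} (hx : x ∈ cubeCorners) :
    ∃ (σ : Equiv.Perm (Fin 3)) (v : Fin 4 → ℝ), v ∈ tetraCorners ∧ phi σ v = x := by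
  obtain ⟨σ, h1, h2⟩ := exists_perm_sorted x
  refine ⟨σ, tOf x σ, ⟨tOf_mem hx.1 h1 h2, ?_⟩, phi_tOf⟩
  rcases hx.2 (σ 0) with ha | ha <;> rcases hx.2 (σ 1) with hb | hb <;>
    rcases hx.2 (σ 2) with hc | hc
  · exact ⟨0, by rw [tOf0, ha]; norm_num⟩
  · exact absurd (ha ▸ (hc ▸ (h1.trans h2))) (by norm_num)
  · exact absurd (ha ▸ (hb ▸ h2)) (by norm_num)
  · exact absurd (ha ▸ (hb ▸ h2)) (by norm_num)
  · exact ⟨1, by rw [tOf1, ha, hb]; norm_num⟩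
  · exact absurd (hb ▸ (hc ▸ h1)) (by norm_num)
  · exact ⟨2, by rw [tOf2, hb, hc]; norm_num⟩
  · exact ⟨3, by rw [tOf3, hc]⟩

lemma phi_strict {σ : Equiv.Perm (Fin 3)} {t : Fin 4 → ℝ} (ht : t ∈ openTetra) :
    phi σ t (σ 2) < phi σ t (σ 1) ∧ phi σ t (σ 1) < phi σ t (σ 0) := by
  rw [phi_s0, phi_s1, phi_s2]
  have h1 := ht.2 1; have h2 := ht.2 2
  constructor <;> linarith

lemma phi_weak {σ : Equiv.Perm (Fin 3)} {t : Fin 4 → ℝ} (ht : t ∈ stdTetra) :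
    phi σ t (σ 2) ≤ phi σ t (σ 1) ∧ phi σ t (σ 1) ≤ phi σ t (σ 0) := by
  rw [phi_s0, phi_s1, phi_s2]
  have h1 := ht.1 1; have h2 := ht.1 2
  constructor <;> linarith

lemma phi_eq_phi {σ σ' : Equiv.Perm (Fin 3)} {t t' : Fin 4 → ℝ} (ht : t ∈ openTetra)
    (ht' : t' ∈ stdTetra) (h : phi σ t = phi σ' t') : σ' = σ ∧ t' = t := by
  have hst := phi_strict (σ := σ) ht
  have hwk := phi_weak (σ := σ') ht'
  rw [← h] at hwk
  have hσ : σ' = σ := perm_eq_of_anti hst.1 hst.2 hwk.1 hwk.2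
  subst hσ
  exact ⟨rfl, (phi_injOn σ' ht.1 ht' h).symm⟩

lemma phi_cont (σ : Equiv.Perm (Fin 3)) :
    Continuous fun t : Fin 4 → ℝ => phi σ t := by
  have h : Continuous fun t : Fin 4 → ℝ =>
      (fun i => ∑ k : Fin 4, if ((σ.symm i : ℕ) < (k : ℕ)) then t k else 0 : Fin 3 → ℝ) := by
    refine continuous_pi fun i => ?_
    refine continuous_finset_sum _ fun k _ => ?_
    by_cases hk : ((σ.symm i : ℕ) < (k : ℕ))
    · simpa [hk] using continuous_apply k
    · simpa [hk] using continuous_const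
  exact ((EuclideanSpace.equiv (Fin 3) ℝ).symm.continuous).comp h

end CubToTri

set_option maxHeartbeats 1000000 in
/-- If a compact 3-manifold `M` admits an ideal cubulation with `n` cubes, then `M`
admits an ideal triangulation with at most `8n` tetrahedra. -/
theorem cubulation_to_triangulation (M : Type) [TopologicalSpace M]
    (hM : IsCompact3Manifold M) (n : ℕ) (h : HasIdealCubulation M n) :
    ∃ m : ℕ, m ≤ 8 * n ∧ HasIdealTriangulation M m := by
  obtain ⟨D⟩ := h
  refine ⟨6 * n, by omega, ?_⟩
  classical
  have hcard : Fintype.card (Fin n × Equiv.Perm (Fin 3)) = 6 * n := by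
    rw [Fintype.card_prod, Fintype.card_perm, Fintype.card_fin, Fintype.card_fin]
    norm_num [Nat.factorial]
    omega
  let e : Fin (6 * n) ≃ Fin n × Equiv.Perm (Fin 3) :=
    (Fintype.equivFinOfCardEq hcard).symm
  let Φ : Fin (6 * n) × ↥stdTetra → Fin n × ↥unitCube :=
    fun p => ((e p.1).1, ⟨CubToTri.phi (e p.1).2 p.2.1, CubToTri.phi_mem_unitCube _ p.2.2⟩)
  have hΦc : Continuous Φ := by
    refine Continuous.prodMk ?_ ?_
    · exact (continuous_of_discreteTopology
        (f := fun i : Fin (6 * n) => (e i).1)).comp continuous_fst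
    · refine Continuous.subtype_mk ?_ _
      have h2 : Continuous fun q : (Fin (6 * n)) × (Fin 4 → ℝ) =>
          CubToTri.phi (e q.1).2 q.2 :=
        continuous_prod_of_discrete_left.mpr fun i => CubToTri.phi_cont (e i).2
      exact h2.comp
        (Continuous.prodMk continuous_fst (continuous_subtype_val.comp continuous_snd))
  have hΦs : Function.Surjective Φ := by
    rintro ⟨i, x, hx⟩
    obtain ⟨σ, t, ht, hphi⟩ := CubToTri.phi_surj hx
    refine ⟨(e.symm (i, σ), ⟨t, ht⟩), ?_⟩
    simp only [Φ, Equiv.apply_symm_apply]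
    exact Prod.ext rfl (Subtype.ext hphi)
  have hcs : CompactSpace ↥stdTetra :=
    isCompact_iff_compactSpace.mp (isCompact_stdSimplex _ _)
  have hΦq : Topology.IsQuotientMap Φ := (hΦc.isClosedMap).isQuotientMap hΦc hΦs
  refine ⟨⟨D.q ∘ Φ, D.quot.comp hΦq, ?_, ?_, ?_⟩⟩
  · -- injOpen
    rintro ⟨i, t⟩ hp ⟨i', t'⟩ hp' hq
    have h1 : ((Φ (i, t)).2 : E3) ∈ openUnitCube := CubToTri.phi_mem_open _ hp
    have h1' : ((Φ (i', t')).2 : E3) ∈ openUnitCube := CubToTri.phi_mem_open _ hp'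
    have h2 : Φ (i, t) = Φ (i', t') := D.injOpen h1 h1' hq
    have hfst : (e i).1 = (e i').1 := congrArg (fun z : Fin n × ↥unitCube => z.1) h2
    have hval : CubToTri.phi (e i).2 t.1 = CubToTri.phi (e i').2 t'.1 :=
      congrArg (fun z : Fin n × ↥unitCube => (z.2 : E3)) h2
    obtain ⟨hσ, htt⟩ := CubToTri.phi_eq_phi hp (t'.2) hval
    have hii : i = i' := e.injective (Prod.ext hfst hσ.symm)
    subst hii
    exact Prod.ext rfl (Subtype.ext htt.symm)
  · -- openSat
    rintro ⟨i, t⟩ ⟨i', t'⟩ hq hopen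
    have h1 : ((Φ (i, t)).2 : E3) ∈ openUnitCube := CubToTri.phi_mem_open _ hopen
    have h1' : ((Φ (i', t')).2 : E3) ∈ openUnitCube := D.openSat _ _ hq h1
    have h2 : Φ (i, t) = Φ (i', t') := D.injOpen h1 h1' hq
    have hval : CubToTri.phi (e i).2 t.1 = CubToTri.phi (e i').2 t'.1 :=
      congrArg (fun z : Fin n × ↥unitCube => (z.2 : E3)) h2
    obtain ⟨hσ, htt⟩ := CubToTri.phi_eq_phi hopen (t'.2) hval
    show (t'.1 : Fin 4 → ℝ) ∈ openTetra
    rw [htt]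
    exact hopen
  · -- vertexCond
    intro x hx
    obtain ⟨p, hpc, hpq⟩ := D.vertexCond x hx
    obtain ⟨σ, v, hv, hphi⟩ := CubToTri.corner_lemma hpc
    refine ⟨(e.symm (p.1, σ), ⟨v, hv.1⟩), hv, ?_⟩
    have hΦp : Φ (e.symm (p.1, σ), ⟨v, hv.1⟩) = p := by
      simp only [Φ, Equiv.apply_symm_apply]
      exact Prod.ext rfl (Subtype.ext hphi)
    show D.q (Φ _) = x
    rw [hΦp]
    exact hpq
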